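/- Let Π be a simple Boolean MDDLog program over EDB schema S_E with IDB schema S_I, and let m be the maximum arity of relations in S_E. Then there exists a finite set S_Π of CSP templates over S_E such that: (1) Π is equivalent to coCSP(S_Π), i.e., for every S_E-instance I, I ⊨ Π iff there is no homomorphism from I to any T ∈ S_Π; and (2) |S_Π| ≤ 2^{|S_I|} and every T ∈ S_Π contains at most |S_E| · 2^{m·|S_I|} facts. -/

import Mathlib

namespace DDLogPaper

/-! ### Basic objects: constants, facts, schemas, instances, homomorphisms -/

/-- The fixed countably infinite set of constants. -/
abbrev Const := ℕ
/-- Variables. -/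
abbrev Var := ℕ
/-- Relation symbols. -/
abbrev RelSym := ℕ

/-- A fact: a relation symbol applied to a tuple of constants. -/
structure Fact where
  rel : RelSym
  args : List Const
deriving DecidableEq

/-- A schema: a finite set of relation symbols, each with an arity. -/
structure Schema where
  rels : Finset RelSym
  arity : RelSym → ℕ

/-- An instance is a finite set of facts. -/
abbrev Inst := Finset Fact

/-- `I` is an instance over schema `S`. -/
def Schema.IsInstance (S : Schema) (I : Inst) : Prop :=
  ∀ f ∈ I, f.rel ∈ S.rels ∧ f.args.length = S.arity f.rel

/-- The active domain of an instance. -/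
def adom (I : Inst) : Finset Const :=
  I.biUnion (fun f => f.args.toFinset)

/-- `h` is a homomorphism from `I` to `J`. -/
def IsHom (h : Const → Const) (I J : Inst) : Prop :=
  ∀ f ∈ I, (⟨f.rel, f.args.map h⟩ : Fact) ∈ J

/-- There is a homomorphism from `I` to `J`. -/
def HomTo (I J : Inst) : Prop := ∃ h, IsHom h I J

/-! ### Girth -/

/-- `I` has a cycle of length `n`: distinct facts `f 0, …, f (n-1)` with positions
`p i ≠ p' i` such that the constant of `f i` at position `p' i` equals the constant of
`f (i+1 mod n)` at position `p (i+1 mod n)`. -/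
def HasCycleOfLength (I : Inst) (n : ℕ) : Prop :=
  0 < n ∧
  ∃ (f : ℕ → Fact) (p p' : ℕ → ℕ),
    (∀ i < n, f i ∈ I) ∧
    (∀ i j, i < n → j < n → f i = f j → i = j) ∧
    (∀ i < n, p i ≠ p' i ∧ p i < (f i).args.length ∧ p' i < (f i).args.length) ∧
    (∀ i < n, (f i).args.getD (p' i) 0 = (f ((i + 1) % n)).args.getD (p ((i + 1) % n)) 0)

/-- The girth of `I` exceeds `g` (in particular this holds if `I` has no cycle at all). -/
def GirthGT (I : Inst) (g : ℕ) : Prop :=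
  ∀ n ≤ g, ¬ HasCycleOfLength I n

/-! ### Tree decompositions -/

/-- `I` has a tree decomposition with bags of size at most `k`, overlap of distinct bags of
size at most `ℓ`, and such that every bag contains all elements of `params`. -/
def HasTreeDecompWithParams (I : Inst) (params : Finset Const) (ℓ k : ℕ) : Prop :=
  ∃ (V : Type) (T : SimpleGraph V) (B : V → Finset Const),
    T.IsTree ∧
    (∀ v, B v ⊆ adom I ∪ params) ∧
    (∀ a ∈ adom I, (T.induce {v | a ∈ B v}).Connected) ∧
    (∀ f ∈ I, ∃ v, ∀ c ∈ f.args, c ∈ B v) ∧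
    (∀ v, params ⊆ B v) ∧
    (∀ v w, v ≠ w → (B v ∩ B w).card ≤ ℓ) ∧
    (∀ v, (B v).card ≤ k)

/-- `I` has treewidth `(ℓ,k)`: it admits an `(ℓ,k)`-tree decomposition. -/
def HasTreeDecomp (I : Inst) (ℓ k : ℕ) : Prop :=
  HasTreeDecompWithParams I ∅ ℓ k

/-! ### Terms, atoms, rules, programs -/

/-- A term is a variable or a constant. -/
inductive Term where
  | var : Var → Term
  | const : Const → Term
deriving DecidableEq

def Term.eval (v : Var → Const) : Term → Const
  | .var x => v x
  | .const c => c

def Term.varSet : Term → Finset Var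
  | .var x => {x}
  | .const _ => ∅

/-- An atom: a relation symbol applied to a tuple of terms. -/
structure Atom where
  rel : RelSym
  args : List Term
deriving DecidableEq

/-- Apply a valuation to an atom, obtaining a fact. -/
def Atom.app (a : Atom) (v : Var → Const) : Fact :=
  ⟨a.rel, a.args.map (Term.eval v)⟩

def Atom.vars (a : Atom) : Finset Var :=
  a.args.foldr (fun t s => t.varSet ∪ s) ∅

/-- The atom mentions no constants. -/
def Atom.constFree (a : Atom) : Prop :=
  ∀ t ∈ a.args, ∃ x, t = Term.var x

def Atom.size (a : Atom) : ℕ := 1 + a.args.length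

/-- The number of variable occurrences in an atom. -/
def Atom.varOccs (a : Atom) : ℕ :=
  (a.args.filter (fun t => match t with | Term.var _ => true | Term.const _ => false)).length

/-- A (disjunctive) rule: a disjunction of head atoms and a conjunction of body atoms. -/
structure Rule where
  head : List Atom
  body : List Atom
deriving DecidableEq

def Rule.atoms (ρ : Rule) : List Atom := ρ.head ++ ρ.body

def Rule.vars (ρ : Rule) : Finset Var :=
  ρ.atoms.foldr (fun a s => a.vars ∪ s) ∅

def Rule.bodyVars (ρ : Rule) : Finset Var :=
  ρ.body.foldr (fun a s => a.vars ∪ s) ∅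

/-- The rule holds in a set of facts `J` (all variables universally quantified). -/
def Rule.holdsIn (ρ : Rule) (J : Set Fact) : Prop :=
  ∀ v : Var → Const, (∀ a ∈ ρ.body, a.app v ∈ J) → ∃ a ∈ ρ.head, a.app v ∈ J

def Rule.size (ρ : Rule) : ℕ := 1 + (ρ.atoms.map Atom.size).sum

def Rule.bodyVarOccs (ρ : Rule) : ℕ := (ρ.body.map Atom.varOccs).sum

/-- A disjunctive Datalog program: a finite set of rules together with a selected goal
relation and its arity. -/
structure Program where
  rules : Finset Rule
  goal : RelSym
  goalArity : ℕ

/-- `P.models I t` formalizes `P ∪ I ⊨ goal(t)` (first-order entailment; by Herbrand's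
theorem for universal sentences it suffices to quantify over all sets of facts). -/
def Program.models (P : Program) (I : Inst) (t : List Const) : Prop :=
  ∀ J : Set Fact, (I : Set Fact) ⊆ J → (∀ ρ ∈ P.rules, ρ.holdsIn J) →
    (⟨P.goal, t⟩ : Fact) ∈ J

/-- The IDB relations of a program: the relations occurring in some rule head, together
with the goal relation. -/
def Program.IDB (P : Program) : Finset RelSym :=
  insert P.goal (P.rules.biUnion (fun ρ => (ρ.head.map Atom.rel).toFinset))

/-- `P` is a well-formed disjunctive Datalog program over EDB schema `S`. -/
def Program.IsDDLog (P : Program) (S : Schema) : Prop :=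
  (∀ r ∈ P.IDB, r ∉ S.rels) ∧
  ∀ ρ ∈ P.rules,
    ρ.body ≠ [] ∧
    (∀ a ∈ ρ.head, a.vars ⊆ ρ.bodyVars) ∧
    (∀ a ∈ ρ.body, a.rel ≠ P.goal) ∧
    ((∃ a ∈ ρ.head, a.rel = P.goal) → ρ.head.length = 1) ∧
    (∀ a ∈ ρ.atoms, a.rel = P.goal → a.args.length = P.goalArity) ∧
    (∀ a ∈ ρ.atoms, a.rel ∉ P.IDB → a.rel ∈ S.rels ∧ a.args.length = S.arity a.rel)

/-- Monadic disjunctive Datalog: all IDB relations except possibly goal have arity ≤ 1. -/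
def Program.IsMDDLog (P : Program) (S : Schema) : Prop :=
  P.IsDDLog S ∧
  ∀ ρ ∈ P.rules, ∀ a ∈ ρ.atoms, a.rel ∈ P.IDB → a.rel ≠ P.goal → a.args.length ≤ 1

/-- Datalog: every rule head consists of exactly one atom. -/
def Program.IsDatalog (P : Program) (S : Schema) : Prop :=
  P.IsDDLog S ∧ ∀ ρ ∈ P.rules, ρ.head.length = 1

/-- Monadic Datalog. -/
def Program.IsMDLog (P : Program) (S : Schema) : Prop :=
  P.IsDatalog S ∧
  ∀ ρ ∈ P.rules, ∀ a ∈ ρ.atoms, a.rel ∈ P.IDB → a.rel ≠ P.goal → a.args.length ≤ 1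

/-- The program mentions no constants. -/
def Program.constFree (P : Program) : Prop :=
  ∀ ρ ∈ P.rules, ∀ a ∈ ρ.atoms, a.constFree

/-- The size of a program (number of symbols needed to write it). -/
def Program.size (P : Program) : ℕ := ∑ ρ ∈ P.rules, ρ.size

/-- The diameter: the maximum number of variables occurring in a rule. -/
def Program.diameter (P : Program) : ℕ := P.rules.sup (fun ρ => ρ.vars.card)

/-- The rule size: the maximum number of variable occurrences in a rule body. -/
def Program.ruleSize (P : Program) : ℕ := P.rules.sup Rule.bodyVarOccs

def Atom.widthContrib (P : Program) (a : Atom) : ℕ :=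
  if a.rel ∈ P.IDB ∧ a.rel ≠ P.goal then a.args.length else 0

/-- The width: the maximum arity of non-goal IDB relations used in the program. -/
def Program.width (P : Program) : ℕ :=
  P.rules.sup (fun ρ => (ρ.atoms.map (Atom.widthContrib P)).foldr max 0)

/-- A simple MDDLog program: each rule has at most one EDB atom, which contains all
variables of the rule body, each exactly once; rules without an EDB atom have at most
one variable. -/
def Program.IsSimple (P : Program) : Prop :=
  ∀ ρ ∈ P.rules,
    (∀ a ∈ ρ.body, ∀ b ∈ ρ.body, a.rel ∉ P.IDB → b.rel ∉ P.IDB → a = b) ∧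
    (∀ a ∈ ρ.body, a.rel ∉ P.IDB →
      ∃ xs : List Var, a.args = xs.map Term.var ∧ xs.Nodup ∧ xs.toFinset = ρ.bodyVars) ∧
    ((∀ a ∈ ρ.body, a.rel ∈ P.IDB) → ρ.bodyVars.card ≤ 1)

/-! ### Datalog with parameters -/

/-- An `(ℓ,k)`-Datalog program with `n` parameters: an `n`-ary `(ℓ+n,k+n)`-Datalog program
in which all IDB relations have arity at least `n` and in every rule all IDB atoms
(including goal atoms) agree on the terms in their last `n` positions. -/
def Program.IsParamDatalog (Γ : Program) (S : Schema) (ℓ k n : ℕ) : Prop :=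
  Γ.IsDatalog S ∧ Γ.goalArity = n ∧
  Γ.width ≤ ℓ + n ∧ Γ.diameter ≤ k + n ∧
  (∀ ρ ∈ Γ.rules, ∀ a ∈ ρ.atoms, a.rel ∈ Γ.IDB → n ≤ a.args.length) ∧
  (∀ ρ ∈ Γ.rules, ∃ ys : List Term,
    ∀ a ∈ ρ.atoms, a.rel ∈ Γ.IDB → a.args.drop (a.args.length - n) = ys)

/-! ### Conjunctive queries and unions of conjunctive queries -/

/-- A conjunctive query: answer variables, relational atoms, and equality atoms. -/
structure CQ where
  answers : List Var
  atoms : List Atom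
  eqs : List (Var × Var)

/-- The CQ only uses relations from schema `S` (with correct arities) and no constants. -/
def CQ.over (q : CQ) (S : Schema) : Prop :=
  ∀ a ∈ q.atoms, a.rel ∈ S.rels ∧ a.args.length = S.arity a.rel ∧ a.constFree

/-- `t` is an answer to the CQ `q` on `I`. -/
def CQ.holds (q : CQ) (I : Inst) (t : List Const) : Prop :=
  ∃ h : Var → Const,
    (∀ a ∈ q.atoms, a.app h ∈ I) ∧
    (∀ e ∈ q.eqs, h e.1 = h e.2) ∧
    q.answers.map h = t

/-- A union of conjunctive queries is a finite list of CQs. -/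
abbrev UCQ := List CQ

def UCQHolds (u : UCQ) (I : Inst) (t : List Const) : Prop :=
  ∃ q ∈ u, q.holds I t

def UCQOver (u : UCQ) (S : Schema) (n : ℕ) : Prop :=
  ∀ q ∈ u, q.over S ∧ q.answers.length = n

def Term.toConst : Term → Const
  | .var x => x
  | .const c => c

/-- A CQ viewed as an instance (variables as constants). -/
def CQ.toInst (q : CQ) : Inst :=
  (q.atoms.map (fun a => (⟨a.rel, a.args.map Term.toConst⟩ : Fact))).toFinset

/-! ### First-order queries -/

/-- First-order formulas over a relational vocabulary, possibly with equality,
without constants and function symbols. -/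
inductive FO where
  | rel : RelSym → List Var → FO
  | eq : Var → Var → FO
  | neg : FO → FO
  | conj : FO → FO → FO
  | disj : FO → FO → FO
  | ex : Var → FO → FO
  | all : Var → FO → FO

/-- Evaluation of a first-order formula in an instance (active-domain quantification). -/
def FO.eval (I : Inst) : FO → (Var → Const) → Prop
  | .rel r xs, v => (⟨r, xs.map v⟩ : Fact) ∈ I
  | .eq x y, v => v x = v y
  | .neg φ, v => ¬ FO.eval I φ v
  | .conj φ ψ, v => FO.eval I φ v ∧ FO.eval I ψ v
  | .disj φ ψ, v => FO.eval I φ v ∨ FO.eval I ψ v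
  | .ex x φ, v => ∃ c ∈ adom I, FO.eval I φ (Function.update v x c)
  | .all x φ, v => ∀ c ∈ adom I, FO.eval I φ (Function.update v x c)

/-- The formula only uses relation symbols from `S`, with correct arities. -/
def FO.over (S : Schema) : FO → Prop
  | .rel r xs => r ∈ S.rels ∧ xs.length = S.arity r
  | .eq _ _ => True
  | .neg φ => FO.over S φ
  | .conj φ ψ => FO.over S φ ∧ FO.over S ψ
  | .disj φ ψ => FO.over S φ ∧ FO.over S ψ
  | .ex _ φ => FO.over S φ
  | .all _ φ => FO.over S φ

/-- Free variables of a first-order formula. -/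
def FO.free : FO → Finset Var
  | .rel _ xs => xs.toFinset
  | .eq x y => {x, y}
  | .neg φ => φ.free
  | .conj φ ψ => φ.free ∪ ψ.free
  | .disj φ ψ => φ.free ∪ ψ.free
  | .ex x φ => φ.free.erase x
  | .all x φ => φ.free.erase x

/-! ### Rewritings -/

/-- `φ` is an FO-rewriting of the (n-ary) program `P` over `S`
(answer variables are `0, …, n-1`). -/
def FOIsRewritingOf (φ : FO) (S : Schema) (P : Program) : Prop :=
  FO.over S φ ∧ φ.free ⊆ Finset.range P.goalArity ∧
  ∀ I : Inst, S.IsInstance I → ∀ t : List Const, t.length = P.goalArity →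
    (∀ c ∈ t, c ∈ adom I) → (FO.eval I φ (fun i => t.getD i 0) ↔ P.models I t)

/-- `u` is a UCQ-rewriting of the program `P` over `S`. -/
def UCQIsRewritingOf (u : UCQ) (S : Schema) (P : Program) : Prop :=
  UCQOver u S P.goalArity ∧
  ∀ I : Inst, S.IsInstance I → ∀ t : List Const, t.length = P.goalArity →
    (∀ c ∈ t, c ∈ adom I) → (UCQHolds u I t ↔ P.models I t)

/-- The program `Γ` is a rewriting of the program `P` over `S`. -/
def Program.IsRewritingOf (Γ : Program) (S : Schema) (P : Program) : Prop :=
  Γ.goalArity = P.goalArity ∧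
  ∀ I : Inst, S.IsInstance I → ∀ t : List Const, t.length = P.goalArity →
    (∀ c ∈ t, c ∈ adom I) → (Γ.models I t ↔ P.models I t)

/-- The program `Γ` is sound for the program `P` over `S`. -/
def Program.SoundFor (Γ : Program) (S : Schema) (P : Program) : Prop :=
  ∀ I : Inst, S.IsInstance I → ∀ t : List Const, t.length = P.goalArity →
    (∀ c ∈ t, c ∈ adom I) → Γ.models I t → P.models I t

/-! ### Boolean queries, CSPs -/

/-- The complement of the generalized CSP given by the set of templates `S`, as a
Boolean query: true on `I` iff `I` maps homomorphically to no template in `S`. -/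
def coCSP (S : Finset Inst) : Inst → Prop := fun I => ∀ T ∈ S, ¬ HomTo I T

/-- `φ` is an FO-definition (rewriting) of the Boolean query `Q` over `S`. -/
def IsFODefOf (φ : FO) (S : Schema) (Q : Inst → Prop) : Prop :=
  FO.over S φ ∧ φ.free = ∅ ∧ ∀ I : Inst, S.IsInstance I → (FO.eval I φ (fun _ => 0) ↔ Q I)

/-- `u` is a UCQ-definition (rewriting) of the Boolean query `Q` over `S`. -/
def IsUCQDefOf (u : UCQ) (S : Schema) (Q : Inst → Prop) : Prop :=
  UCQOver u S 0 ∧ ∀ I : Inst, S.IsInstance I → (UCQHolds u I [] ↔ Q I)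

/-- `Γ` is an MDLog-definition (rewriting) of the Boolean query `Q` over `S`. -/
def IsMDLogDefOf (Γ : Program) (S : Schema) (Q : Inst → Prop) : Prop :=
  Γ.IsMDLog S ∧ Γ.constFree ∧ Γ.goalArity = 0 ∧
  ∀ I : Inst, S.IsInstance I → (Γ.models I [] ↔ Q I)

/-- `Γ` is a Datalog-definition (rewriting) of the Boolean query `Q` over `S`. -/
def IsDLogDefOf (Γ : Program) (S : Schema) (Q : Inst → Prop) : Prop :=
  Γ.IsDatalog S ∧ Γ.constFree ∧ Γ.goalArity = 0 ∧
  ∀ I : Inst, S.IsInstance I → (Γ.models I [] ↔ Q I)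

/-! ### Aggregation schemas -/

/-- A `k`-aggregation schema for `SE`: every relation `R` is of the form `R_{q(x̄)}` for a
quantifier-free CQ `q(x̄)` over `SE` with at most `k` answer variables, the arity of `R`
being the number of answer variables of `q(x̄)`. -/
structure Aggregation (SE : Schema) (k : ℕ) where
  S : Schema
  q : RelSym → CQ
  wf : ∀ R ∈ S.rels,
    (q R).over SE ∧
    (q R).eqs = [] ∧
    (q R).answers.Nodup ∧
    (q R).answers.length = S.arity R ∧
    (q R).answers.length ≤ k ∧
    (∀ a ∈ (q R).atoms, a.vars ⊆ (q R).answers.toFinset)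

/-- `I'` is the `S'`-instance corresponding to the `SE`-instance `I`: it consists of all
facts `R_{q(x̄)}(ā)` with `I ⊨ q(ā)`. -/
def CorrUp {SE : Schema} {k : ℕ} (A : Aggregation SE k) (I I' : Inst) : Prop :=
  ∀ f : Fact, f ∈ I' ↔ (f.rel ∈ A.S.rels ∧ (A.q f.rel).holds I f.args)

/-- `I` is the `SE`-instance corresponding to the `S'`-instance `I'`: it consists of all
facts that occur as a conjunct of `q(ā)` for some fact `R_{q(x̄)}(ā) ∈ I'`. -/
def CorrDown {SE : Schema} {k : ℕ} (A : Aggregation SE k) (I' I : Inst) : Prop :=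
  ∀ g : Fact, g ∈ I ↔
    ∃ f ∈ I', ∃ h : Var → Const,
      (A.q f.rel).answers.map h = f.args ∧ ∃ a ∈ (A.q f.rel).atoms, Atom.app a h = g

/-! ### Equality -/

/-- The distinguished binary relation symbol `eq`. -/
def eqRel : RelSym := 0

/-- The schema contains the distinguished binary relation `eq`. -/
def HasEqualitySchema (S : Schema) : Prop := eqRel ∈ S.rels ∧ S.arity eqRel = 2

/-- A template has equality: it interprets `eq` as `{(a,a) | a ∈ adom T}`. -/
def TemplateHasEquality (T : Inst) : Prop :=
  ∀ a b : Const, ((⟨eqRel, [a, b]⟩ : Fact) ∈ T ↔ (a = b ∧ a ∈ adom T))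

def eqRuleFwd (R : RelSym) : Rule :=
  ⟨[⟨R, [Term.var 1]⟩], [⟨R, [Term.var 0]⟩, ⟨eqRel, [Term.var 0, Term.var 1]⟩]⟩

def eqRuleBwd (R : RelSym) : Rule :=
  ⟨[⟨R, [Term.var 0]⟩], [⟨R, [Term.var 1]⟩, ⟨eqRel, [Term.var 0, Term.var 1]⟩]⟩

/-- The extension `P^=` of `P` with the fresh EDB relation `eq` and the rules
`P(x) ∧ eq(x,y) → P(y)` and `P(y) ∧ eq(x,y) → P(x)` for each IDB relation `P`. -/
def Program.withEq (P : Program) : Program :=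
  ⟨P.rules ∪ (P.IDB.erase P.goal).biUnion (fun R => {eqRuleFwd R, eqRuleBwd R}),
   P.goal, P.goalArity⟩

/-! ### (1,k)-decompositions and decomposition girth -/

def partInst (I : Inst) (part : Fact → ℕ) (v : ℕ) : Inst :=
  I.filter (fun f => part f = v)

/-- `part` induces a `(1,k)`-decomposition of `I`: parts have active domains of size at
most `k`, distinct parts overlap in at most one constant. -/
def IsDecompOf (I : Inst) (part : Fact → ℕ) (k : ℕ) : Prop :=
  (∀ v ∈ I.image part, (adom (partInst I part v)).card ≤ k) ∧
  (∀ v w, v ∈ I.image part → w ∈ I.image part → v ≠ w →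
    ((adom (partInst I part v)) ∩ (adom (partInst I part w))).card ≤ 1)

/-- The instance over an aggregation schema induced by a decomposition: one fact per part,
whose arguments enumerate the active domain of the part (in a fixed order). -/
def decompInst (I : Inst) (part : Fact → ℕ) : Inst :=
  (I.image part).image
    (fun v => (⟨v, (adom (partInst I part v)).sort (· ≤ ·)⟩ : Fact))

/-- The `(1,k)`-decomposition girth of `I` exceeds `g`: some `(1,k)`-decomposition `D` of
`I` is such that the girth of `I_D` exceeds `g`. -/
def DecompGirthGT (I : Inst) (k g : ℕ) : Prop :=
  ∃ part : Fact → ℕ, IsDecompOf I part k ∧ GirthGT (decompInst I part) g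

/-! ### MMSNP -/

/-- An atom `X_i(x_j)` built from a monadic second-order variable. -/
structure SOAtom where
  pred : ℕ
  var : Var
deriving DecidableEq

/-- An implication `β₁ ∨ ⋯ ∨ βₙ ← α₁ ∧ ⋯ ∧ αₘ` of an MMSNP formula: the `β`s are
second-order atoms, the `α`s are second-order atoms or EDB atoms. -/
structure MMSNPImpl where
  headDisjuncts : List SOAtom
  bodySO : List SOAtom
  bodyEDB : List Fact
deriving DecidableEq

/-- An MMSNP formula `∃X₁⋯∃Xp ∀x₁⋯∀xm φ` with `freeVarCount` free first-order variables
(the variables `0, …, freeVarCount - 1`). -/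
structure MMSNP where
  freeVarCount : ℕ
  impls : List MMSNPImpl

def MMSNPOver (θ : MMSNP) (S : Schema) : Prop :=
  ∀ c ∈ θ.impls, ∀ f ∈ c.bodyEDB, f.rel ∈ S.rels ∧ f.args.length = S.arity f.rel

def MMSNPImpl.vars (c : MMSNPImpl) : Finset Var :=
  (c.headDisjuncts.map SOAtom.var).toFinset ∪ (c.bodySO.map SOAtom.var).toFinset ∪
    c.bodyEDB.foldr (fun f s => f.args.toFinset ∪ s) ∅

/-- The diameter of an MMSNP formula: the maximum number of variables in an implication. -/
def MMSNP.diameter (θ : MMSNP) : ℕ :=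
  (θ.impls.map (fun c => c.vars.card)).foldr max 0

/-- `I ⊨ θ[t]`: satisfaction of an MMSNP formula in an instance, with the free variables
`0, …, freeVarCount-1` interpreted by the tuple `t`. -/
def MMSNPSat (θ : MMSNP) (I : Inst) (t : List Const) : Prop :=
  ∃ X : ℕ → Set Const,
    ∀ v : Var → Const, (∀ x, v x ∈ adom I) → (∀ i < θ.freeVarCount, v i = t.getD i 0) →
      ∀ c ∈ θ.impls,
        ((∀ a ∈ c.bodySO, v a.var ∈ X a.pred) ∧
         (∀ f ∈ c.bodyEDB, (⟨f.rel, f.args.map v⟩ : Fact) ∈ I)) →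
        ∃ a ∈ c.headDisjuncts, v a.var ∈ X a.pred

end DDLogPaper


/-!
A model of `Π ∪ I` without `goal()` is determined, on its IDB part, by the set `σ` of nullary
IDB facts and by the type of each constant, i.e. the set of unary IDB relations holding at it.
Since `Π` is simple, a rule without EDB atom only sees `σ` and the type of one constant, and a
rule with an EDB atom only sees `σ`, one fact of `I` and the types of its constants. Hence, for
each admissible `σ`, the template `T_σ` whose elements are the `σ`-types (encoded as constants)
and whose facts are the EDB facts over them that satisfy all rules locally works: typings of
`I` that give a model are exactly homomorphisms `I → T_σ`. There are at most `2^|S_I|` choices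
of `σ` and of types, which gives both bounds.
-/

namespace DDLogPaper

section ListsOfLength

variable {α : Type*} [DecidableEq α]

def listsOfLength (s : Finset α) (n : ℕ) : Finset (List α) :=
  (Fintype.piFinset fun _ : Fin n => s).image List.ofFn

theorem mem_listsOfLength {s : Finset α} {n : ℕ} {l : List α} :
    l ∈ listsOfLength s n ↔ l.length = n ∧ ∀ x ∈ l, x ∈ s := by
  simp only [listsOfLength, Finset.mem_image, Fintype.mem_piFinset]
  constructor
  · rintro ⟨g, hg, rfl⟩
    refine ⟨List.length_ofFn, fun x hx => ?_⟩
    obtain ⟨i, rfl⟩ := List.mem_ofFn.1 hx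
    exact hg i
  · rintro ⟨rfl, hl⟩
    exact ⟨fun i => l[i], fun i => hl _ (List.getElem_mem _), List.ofFn_getElem⟩

theorem card_listsOfLength_le (s : Finset α) (n : ℕ) :
    (listsOfLength s n).card ≤ s.card ^ n :=
  Finset.card_image_le.trans (by simp)

end ListsOfLength

theorem mem_foldr_union_iff {β : Type*} (g : β → Finset Var) (l : List β) (x : Var) :
    x ∈ l.foldr (fun b s => g b ∪ s) ∅ ↔ ∃ b ∈ l, x ∈ g b := by
  induction l with
  | nil => simp
  | cons b l ih => simp [ih]

theorem Atom.mem_vars {a : Atom} {x : Var} : x ∈ a.vars ↔ Term.var x ∈ a.args := by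
  rw [Atom.vars, mem_foldr_union_iff]
  constructor
  · rintro ⟨_ | _, ht, hx⟩ <;> simp only [Term.varSet, Finset.mem_singleton,
      Finset.notMem_empty] at hx
    exact hx ▸ ht
  · exact fun h => ⟨_, h, Finset.mem_singleton_self x⟩

theorem Rule.mem_bodyVars {ρ : Rule} {x : Var} :
    x ∈ ρ.bodyVars ↔ ∃ b ∈ ρ.body, x ∈ b.vars :=
  mem_foldr_union_iff _ _ _

theorem Atom.app_congr {a : Atom} {v w : Var → Const} (h : ∀ x ∈ a.vars, v x = w x) :
    a.app v = a.app w := by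
  simp only [Atom.app, Fact.mk.injEq, true_and]
  refine List.map_congr_left fun t ht => ?_
  cases t with
  | var x => exact h x (Atom.mem_vars.2 ht)
  | const c => rfl

theorem Atom.eq_of_app_eq {a : Atom} {v w : Var → Const} (h : a.app v = a.app w) :
    ∀ x ∈ a.vars, v x = w x := fun x hx =>
  List.map_inj_left.1 (Fact.mk.inj h).2 (Term.var x) (Atom.mem_vars.1 hx)

theorem Atom.exists_app_eq {a : Atom} {xs : List Var} (hxs : a.args = xs.map Term.var)
    (hnd : xs.Nodup) {f : Fact} (hrel : f.rel = a.rel) (hlen : f.args.length = xs.length) :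
    ∃ v, a.app v = f := by
  refine ⟨fun x => f.args.getD (xs.idxOf x) 0, ?_⟩
  obtain ⟨R, args⟩ := f
  simp only [Atom.app, hxs, List.map_map, Fact.mk.injEq] at hrel hlen ⊢
  refine ⟨hrel.symm, List.ext_getElem (by simpa using hlen.symm) fun i h₁ h₂ => ?_⟩
  simp only [List.getElem_map, Function.comp_apply, Term.eval]
  rw [List.Nodup.idxOf_getElem hnd i (by simpa using h₁), List.getD_eq_getElem _ _ h₂]

def Fact.map (h : Const → Const) (f : Fact) : Fact := ⟨f.rel, f.args.map h⟩

theorem Atom.app_comp {a : Atom} (ha : a.constFree) (h : Const → Const) (v : Var → Const) :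
    a.app (h ∘ v) = (a.app v).map h := by
  simp only [Atom.app, Fact.map, List.map_map, Fact.mk.injEq, true_and]
  refine List.map_congr_left fun t ht => ?_
  obtain ⟨x, rfl⟩ := ha t ht
  rfl

def Rule.holdsAt (ρ : Rule) (J : Set Fact) (v : Var → Const) : Prop :=
  (∀ a ∈ ρ.body, a.app v ∈ J) → ∃ a ∈ ρ.head, a.app v ∈ J

theorem Rule.holdsAt_congr {ρ : Rule} (hhead : ∀ a ∈ ρ.head, a.vars ⊆ ρ.bodyVars)
    {J : Set Fact} {v w : Var → Const} (h : ∀ x ∈ ρ.bodyVars, v x = w x) :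
    ρ.holdsAt J v ↔ ρ.holdsAt J w := by
  have hbody : ∀ a ∈ ρ.body, a.app v = a.app w := fun a ha =>
    Atom.app_congr fun x hx => h x (Rule.mem_bodyVars.2 ⟨a, ha, hx⟩)
  have hhd : ∀ a ∈ ρ.head, a.app v = a.app w := fun a ha =>
    Atom.app_congr fun x hx => h x (hhead a ha hx)
  exact imp_congr (forall₂_congr fun a ha => by rw [hbody a ha])
    (exists_congr fun a => and_congr_right fun ha => by rw [hhd a ha])

theorem Rule.holdsAt_preimage {ρ : Rule} (hρ : ∀ a ∈ ρ.atoms, a.constFree)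
    (h : Const → Const) (J : Set Fact) (v : Var → Const) :
    ρ.holdsAt (Fact.map h ⁻¹' J) v ↔ ρ.holdsAt J (h ∘ v) := by
  refine imp_congr (forall₂_congr fun a ha => ?_)
    (exists_congr fun a => and_congr_right fun ha => ?_) <;>
    rw [Set.mem_preimage, Atom.app_comp (hρ a (by simp [Rule.atoms, ha]))]

theorem Rule.holdsIn.preimage {ρ : Rule} {J : Set Fact} (hJ : ρ.holdsIn J)
    (hρ : ∀ a ∈ ρ.atoms, a.constFree) (h : Const → Const) :
    ρ.holdsIn (Fact.map h ⁻¹' J) := fun v =>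
  (Rule.holdsAt_preimage hρ h J v).2 (hJ (h ∘ v))

theorem Rule.holdsIn.of_subset {ρ : Rule} {S J : Set Fact} (hJ : ρ.holdsIn J) (hSJ : S ⊆ J)
    (hhead : ∀ v, ∀ a ∈ ρ.head, a.app v ∈ J → a.app v ∈ S) : ρ.holdsIn S :=
  fun v hbody =>
  let ⟨a, ha, haJ⟩ := hJ v fun b hb => hSJ (hbody b hb)
  ⟨a, ha, hhead v a ha haJ⟩

def labelFacts (σ : Finset RelSym) (τ : Const → Finset RelSym) : Set Fact :=
  {f | (f.args = [] ∧ f.rel ∈ σ) ∨ ∃ c, f.args = [c] ∧ f.rel ∈ τ c}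

theorem preimage_labelFacts (σ : Finset RelSym) (τ : Const → Finset RelSym)
    (h : Const → Const) : Fact.map h ⁻¹' labelFacts σ τ = labelFacts σ (τ ∘ h) := by
  ext ⟨R, args⟩
  rcases args with _ | ⟨c, _ | ⟨d, args⟩⟩ <;> simp [labelFacts, Fact.map]

theorem rel_mem_of_mem_labelFacts {σ S : Finset RelSym} {τ : Const → Finset RelSym} {f : Fact}
    (hσ : σ ⊆ S) (hτ : ∀ c, τ c ⊆ S) (hf : f ∈ labelFacts σ τ) : f.rel ∈ S := by
  rcases hf with ⟨-, h⟩ | ⟨c, -, h⟩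
  exacts [hσ h, hτ c h]

section Parts

open Classical

noncomputable def nullaryPart (S : Finset RelSym) (J : Set Fact) : Finset RelSym :=
  S.filter fun Q => (⟨Q, []⟩ : Fact) ∈ J

noncomputable def unaryPart (S : Finset RelSym) (J : Set Fact) (c : Const) : Finset RelSym :=
  S.filter fun Q => (⟨Q, [c]⟩ : Fact) ∈ J

theorem labelFacts_parts_subset (S : Finset RelSym) (J : Set Fact) :
    labelFacts (nullaryPart S J) (unaryPart S J) ⊆ J := by
  rintro ⟨R, args⟩ (⟨rfl, h⟩ | ⟨c, rfl, h⟩)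
  exacts [(Finset.mem_filter.1 h).2, (Finset.mem_filter.1 h).2]

theorem mem_labelFacts_parts {S : Finset RelSym} {J : Set Fact} {f : Fact} (hf : f ∈ J)
    (hrel : f.rel ∈ S) (hlen : f.args.length ≤ 1) :
    f ∈ labelFacts (nullaryPart S J) (unaryPart S J) := by
  obtain ⟨R, _ | ⟨c, _ | _⟩⟩ := f
  · exact Or.inl ⟨rfl, Finset.mem_filter.2 ⟨hrel, hf⟩⟩
  · exact Or.inr ⟨c, rfl, Finset.mem_filter.2 ⟨hrel, hf⟩⟩
  · simp at hlen

end Parts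

namespace Program

open Classical

variable {P : Program} {SE : Schema}

theorem head_rel_mem_IDB {ρ : Rule} (hρ : ρ ∈ P.rules) {a : Atom} (ha : a ∈ ρ.head) :
    a.rel ∈ P.IDB :=
  Finset.mem_insert_of_mem <| Finset.mem_biUnion.2
    ⟨ρ, hρ, List.mem_toFinset.2 (List.mem_map.2 ⟨a, ha, rfl⟩)⟩

variable (P)

noncomputable def types (σ : Finset RelSym) : Finset (Finset RelSym) :=
  P.IDB.powerset.filter fun t => ∀ ρ ∈ P.rules, ρ.holdsIn (labelFacts σ fun _ => t)

def decodeLabel (c : Const) : Finset RelSym := (Encodable.decode c).getD ∅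

/-- Constants that do not encode a `σ`-type get an arbitrary one, so that the rules without
EDB atom also hold at them. -/
noncomputable def typeLabel (σ : Finset RelSym) (c : Const) : Finset RelSym :=
  if decodeLabel c ∈ P.types σ then decodeLabel c else Classical.epsilon (· ∈ P.types σ)

def Allowed (σ : Finset RelSym) (f : Fact) : Prop :=
  ∀ ρ ∈ P.rules, ρ.holdsIn (insert f (labelFacts σ (P.typeLabel σ)))

noncomputable def template (SE : Schema) (σ : Finset RelSym) : Inst :=
  (SE.rels.biUnion fun R =>
    (listsOfLength ((P.types σ).image Encodable.encode) (SE.arity R)).image (Fact.mk R)).filter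
    (P.Allowed σ)

noncomputable def admissibleNullaryParts : Finset (Finset RelSym) :=
  P.IDB.powerset.filter fun σ => P.goal ∉ σ ∧ (P.types σ).Nonempty

variable {P}

theorem subset_IDB_of_mem_types {σ t : Finset RelSym} (ht : t ∈ P.types σ) : t ⊆ P.IDB :=
  Finset.mem_powerset.1 (Finset.mem_filter.1 ht).1

theorem holdsIn_of_mem_types {σ t : Finset RelSym} (ht : t ∈ P.types σ) :
    ∀ ρ ∈ P.rules, ρ.holdsIn (labelFacts σ fun _ => t) :=
  (Finset.mem_filter.1 ht).2

theorem typeLabel_encode {σ t : Finset RelSym} (ht : t ∈ P.types σ) :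
    P.typeLabel σ (Encodable.encode t) = t := by
  simp [typeLabel, decodeLabel, Encodable.encodek, ht]

theorem typeLabel_mem_types {σ : Finset RelSym} (hne : (P.types σ).Nonempty) (c : Const) :
    P.typeLabel σ c ∈ P.types σ := by
  unfold typeLabel
  split_ifs with h
  exacts [h, Classical.epsilon_spec hne]

theorem mem_template {σ : Finset RelSym} {f : Fact} :
    f ∈ P.template SE σ ↔ f.rel ∈ SE.rels ∧ f.args.length = SE.arity f.rel ∧
      (∀ c ∈ f.args, c ∈ (P.types σ).image Encodable.encode) ∧ P.Allowed σ f := by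
  obtain ⟨R, args⟩ := f
  simp only [template, Finset.mem_filter, Finset.mem_biUnion, Finset.mem_image,
    mem_listsOfLength, Fact.mk.injEq]
  constructor
  · rintro ⟨⟨R', hR', args', ⟨hlen, hargs⟩, rfl, rfl⟩, hA⟩
    exact ⟨hR', hlen, hargs, hA⟩
  · rintro ⟨hR, hlen, hargs, hA⟩
    exact ⟨⟨R, hR, args, ⟨hlen, hargs⟩, rfl, rfl⟩, hA⟩

theorem card_types_le (σ : Finset RelSym) : (P.types σ).card ≤ 2 ^ P.IDB.card :=
  (Finset.card_filter_le _ _).trans (Finset.card_powerset _).le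

theorem card_admissibleNullaryParts_le : P.admissibleNullaryParts.card ≤ 2 ^ P.IDB.card :=
  (Finset.card_filter_le _ _).trans (Finset.card_powerset _).le

theorem card_template_le (σ : Finset RelSym) :
    (P.template SE σ).card ≤ SE.rels.card * 2 ^ (SE.rels.sup SE.arity * P.IDB.card) := by
  have hcodes : ((P.types σ).image Encodable.encode).card ≤ 2 ^ P.IDB.card :=
    Finset.card_image_le.trans (card_types_le σ)
  calc (P.template SE σ).card
      ≤ ∑ R ∈ SE.rels,
          ((listsOfLength ((P.types σ).image Encodable.encode) (SE.arity R)).image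
            (Fact.mk R)).card :=
        (Finset.card_filter_le _ _).trans Finset.card_biUnion_le
    _ ≤ ∑ _R ∈ SE.rels, 2 ^ (SE.rels.sup SE.arity * P.IDB.card) := by
        refine Finset.sum_le_sum fun R hR => ?_
        calc _ ≤ ((P.types σ).image Encodable.encode).card ^ SE.arity R :=
              Finset.card_image_le.trans (card_listsOfLength_le _ _)
          _ ≤ (2 ^ P.IDB.card) ^ SE.rels.sup SE.arity :=
              (Nat.pow_le_pow_left hcodes _).trans
                (Nat.pow_le_pow_right Nat.one_le_two_pow (Finset.le_sup hR))
          _ = _ := by rw [← pow_mul, mul_comm]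
    _ = _ := by rw [Finset.sum_const, smul_eq_mul]

theorem rel_mem_IDB_of_mem_labelFacts_types {σ : Finset RelSym} {τ : Const → Finset RelSym}
    (hσ : σ ⊆ P.IDB) (hτ : ∀ c, τ c ∈ P.types σ) {f : Fact}
    (hf : f ∈ labelFacts σ τ) :
    f.rel ∈ P.IDB :=
  rel_mem_of_mem_labelFacts hσ (fun c => subset_IDB_of_mem_types (hτ c)) hf

/-- Rules without EDB atoms have at most one variable, so they only see the type of a single
constant. -/
theorem holdsIn_labelFacts (hP : P.IsDDLog SE) (hcf : P.constFree) (hsimple : P.IsSimple)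
    {σ : Finset RelSym} {τ : Const → Finset RelSym} (hσ : σ ⊆ P.IDB)
    (hτ : ∀ c, τ c ∈ P.types σ) : ∀ ρ ∈ P.rules, ρ.holdsIn (labelFacts σ τ) := by
  intro ρ hρ v hbody
  have hIDB : ∀ b ∈ ρ.body, b.rel ∈ P.IDB := fun b hb =>
    rel_mem_IDB_of_mem_labelFacts_types hσ hτ (hbody b hb)
  obtain ⟨c, hc⟩ : ∃ c, ∀ x ∈ ρ.bodyVars, v x = c := by
    rcases ρ.bodyVars.eq_empty_or_nonempty with h | ⟨x₀, hx₀⟩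
    · exact ⟨0, by simp [h]⟩
    · exact ⟨v x₀, fun x hx => by
        rw [Finset.card_le_one.1 ((hsimple ρ hρ).2.2 hIDB) x hx x₀ hx₀]⟩
  have hconst := holdsIn_of_mem_types (hτ c) ρ hρ
  rw [← Function.comp_def τ, ← preimage_labelFacts] at hconst
  exact (Rule.holdsAt_congr (hP.2 ρ hρ).2.1 hc).2
    ((Rule.holdsAt_preimage (hcf ρ hρ) _ _ v).1 (hconst v)) hbody

theorem holdsIn_union_labelFacts (hP : P.IsDDLog SE) (hcf : P.constFree)
    (hsimple : P.IsSimple) {σ : Finset RelSym} (hσ : σ ⊆ P.IDB) (hne : (P.types σ).Nonempty)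
    {E : Set Fact} (hE : ∀ f ∈ E, f.rel ∉ P.IDB ∧ P.Allowed σ f) :
    ∀ ρ ∈ P.rules, ρ.holdsIn (E ∪ labelFacts σ (P.typeLabel σ)) := by
  intro ρ hρ v hbody
  have hL : ∀ g ∈ labelFacts σ (P.typeLabel σ), g.rel ∈ P.IDB := fun g =>
    rel_mem_IDB_of_mem_labelFacts_types hσ (typeLabel_mem_types hne)
  by_cases hEDB : ∃ a₀ ∈ ρ.body, a₀.rel ∉ P.IDB
  · obtain ⟨a₀, ha₀, hrel⟩ := hEDB
    have hf : a₀.app v ∈ E := (hbody a₀ ha₀).resolve_right fun h => hrel (hL _ h)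
    have hins :
        ∀ b ∈ ρ.body, b.app v ∈ insert (a₀.app v) (labelFacts σ (P.typeLabel σ)) := by
      intro b hb
      by_cases hb' : b.rel ∈ P.IDB
      · exact Or.inr ((hbody b hb).resolve_left fun h => (hE _ h).1 hb')
      · rw [(hsimple ρ hρ).1 b hb a₀ ha₀ hb' hrel]
        exact Set.mem_insert _ _
    obtain ⟨a, ha, h⟩ := (hE _ hf).2 ρ hρ v hins
    exact ⟨a, ha, h.elim (fun h => Or.inl (h ▸ hf)) Or.inr⟩
  · push Not at hEDB
    obtain ⟨a, ha, h⟩ :=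
      holdsIn_labelFacts hP hcf hsimple hσ (typeLabel_mem_types hne) ρ hρ v
      fun b hb => (hbody b hb).resolve_left fun h => (hE _ h).1 (hEDB b hb)
    exact ⟨a, ha, Or.inr h⟩

/-- The linear EDB atom of a rule lets every valuation into the template be pulled back
along `h`. -/
theorem allowed_map (hP : P.IsDDLog SE) (hcf : P.constFree) (hsimple : P.IsSimple)
    {σ : Finset RelSym} (hσ : σ ⊆ P.IDB) (hne : (P.types σ).Nonempty)
    {τ : Const → Finset RelSym} {h : Const → Const} (hτ : ∀ c, P.typeLabel σ (h c) = τ c)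
    {f : Fact} (hf : f.rel ∉ P.IDB)
    (hmodel : ∀ ρ ∈ P.rules, ρ.holdsIn (insert f (labelFacts σ τ))) :
    P.Allowed σ (f.map h) := by
  have hpre : Fact.map h ⁻¹' labelFacts σ (P.typeLabel σ) = labelFacts σ τ := by
    rw [preimage_labelFacts]
    exact congrArg _ (funext hτ)
  have hL : ∀ g ∈ labelFacts σ (P.typeLabel σ), g.rel ∈ P.IDB := fun g =>
    rel_mem_IDB_of_mem_labelFacts_types hσ (typeLabel_mem_types hne)
  intro ρ hρ v hbody
  by_cases hEDB : ∃ a₀ ∈ ρ.body, a₀.rel ∉ P.IDB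
  swap
  · push Not at hEDB
    obtain ⟨a, ha, h⟩ :=
      holdsIn_labelFacts hP hcf hsimple hσ (typeLabel_mem_types hne) ρ hρ v
      fun b hb => (hbody b hb).resolve_left fun he =>
        hf ((congrArg Fact.rel he : b.rel = f.rel) ▸ hEDB b hb)
    exact ⟨a, ha, Or.inr h⟩
  obtain ⟨a₀, ha₀, hrel⟩ := hEDB
  obtain ⟨xs, hxs, hnd, hcover⟩ := (hsimple ρ hρ).2.1 a₀ ha₀ hrel
  have happ : a₀.app v = f.map h := (hbody a₀ ha₀).resolve_right fun h => hrel (hL _ h)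
  obtain ⟨w, hw⟩ : ∃ w, a₀.app w = f := by
    refine Atom.exists_app_eq hxs hnd (congrArg Fact.rel happ).symm ?_
    simpa [Atom.app, Fact.map, hxs] using (congrArg (fun g => g.args.length) happ).symm
  have hvw : ∀ x ∈ ρ.bodyVars, v x = (h ∘ w) x := by
    intro x hx
    rw [← hcover, List.mem_toFinset] at hx
    refine Atom.eq_of_app_eq ?_ x (Atom.mem_vars.2 (hxs ▸ List.mem_map_of_mem hx))
    rw [happ, Atom.app_comp (hcf ρ hρ a₀ (List.mem_append_right _ ha₀)), hw]
  refine (Rule.holdsAt_congr (hP.2 ρ hρ).2.1 hvw).2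
    ((Rule.holdsAt_preimage (hcf ρ hρ) h _ w).1 fun hbodyw => ?_) hbody
  have hins : ∀ b ∈ ρ.body, b.app w ∈ insert f (labelFacts σ τ) := by
    intro b hb
    by_cases hb' : b.rel ∈ P.IDB
    · rw [← hpre]
      exact Or.inr ((hbodyw b hb).resolve_left fun he =>
        hf ((congrArg Fact.rel he : b.rel = f.rel) ▸ hb'))
    · rw [(hsimple ρ hρ).1 b hb a₀ ha₀ hb' hrel, hw]
      exact Set.mem_insert _ _
  obtain ⟨a, ha, haw⟩ := hmodel ρ hρ w hins
  rw [← hpre] at haw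
  exact ⟨a, ha, haw.elim (fun he => Or.inl (congrArg (Fact.map h) he)) Or.inr⟩

theorem not_models_of_homTo (hP : P.IsDDLog SE) (hcf : P.constFree) (hsimple : P.IsSimple)
    {σ : Finset RelSym} (hσ : σ ∈ P.admissibleNullaryParts) {I : Inst}
    (hhom : HomTo I (P.template SE σ)) : ¬ P.models I [] := by
  obtain ⟨hσIDB, hgoal, hne⟩ : σ ⊆ P.IDB ∧ P.goal ∉ σ ∧ (P.types σ).Nonempty := by
    simpa [admissibleNullaryParts] using hσ
  obtain ⟨h, hh⟩ := hhom
  have hgoalIDB : P.goal ∈ P.IDB := Finset.mem_insert_self _ _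
  have hW := holdsIn_union_labelFacts hP hcf hsimple hσIDB hne
    (E := ↑(P.template SE σ)) fun f hf =>
      ⟨fun hIDB => hP.1 _ hIDB (mem_template.1 hf).1, (mem_template.1 hf).2.2.2⟩
  intro hm
  rcases hm _ (fun f hf => Or.inl (hh f hf)) (fun ρ hρ => (hW ρ hρ).preimage (hcf ρ hρ) h)
    with hT | ⟨-, hσgoal⟩ | ⟨c, hc, -⟩
  · exact hP.1 _ hgoalIDB (mem_template.1 hT).1
  · exact hgoal hσgoal
  · simp [Fact.map] at hc

theorem mem_labelFacts_of_head (hP : P.IsMDDLog SE) (hbool : P.goalArity = 0) {J : Set Fact}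
    (hgoal : (⟨P.goal, []⟩ : Fact) ∉ J) {ρ : Rule} (hρ : ρ ∈ P.rules) {a : Atom}
    (ha : a ∈ ρ.head) {v : Var → Const} (hJ : a.app v ∈ J) :
    a.app v ∈ labelFacts (nullaryPart P.IDB J) (unaryPart P.IDB J) := by
  have hIDB := head_rel_mem_IDB hρ ha
  have hatom : a ∈ ρ.atoms := List.mem_append_left _ ha
  refine mem_labelFacts_parts hJ hIDB ?_
  rw [Atom.app, List.length_map]
  by_cases hg : a.rel = P.goal
  · have hnil : a.args = [] :=
      List.length_eq_zero_iff.1 (((hP.1.2 ρ hρ).2.2.2.2.1 a hatom hg).trans hbool)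
    exact absurd (by simpa [Atom.app, hnil, hg] using hJ) hgoal
  · exact hP.2 ρ hρ a hatom hIDB hg

theorem exists_homTo_of_not_models (hP : P.IsMDDLog SE) (hcf : P.constFree)
    (hbool : P.goalArity = 0) (hsimple : P.IsSimple) {I : Inst} (hI : SE.IsInstance I)
    (hm : ¬ P.models I []) : ∃ σ ∈ P.admissibleNullaryParts, HomTo I (P.template SE σ) := by
  simp only [Program.models, not_forall] at hm
  obtain ⟨J, hIJ, hJ, hgoal⟩ := hm
  set σ := nullaryPart P.IDB J
  set τ := unaryPart P.IDB J
  have hmodel : ∀ S ⊆ J, labelFacts σ τ ⊆ S → ∀ ρ ∈ P.rules, ρ.holdsIn S :=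
    fun S hSJ hLS ρ hρ => (hJ ρ hρ).of_subset hSJ fun _ _ ha h =>
      hLS (mem_labelFacts_of_head hP hbool hgoal hρ ha h)
  have hτ : ∀ c, τ c ∈ P.types σ := fun c => by
    refine Finset.mem_filter.2
      ⟨Finset.mem_powerset.2 (Finset.filter_subset _ _), fun ρ hρ => ?_⟩
    rw [← Function.comp_def τ, ← preimage_labelFacts]
    exact (hmodel _ (labelFacts_parts_subset _ _) subset_rfl ρ hρ).preimage (hcf ρ hρ) _
  have hσ : σ ∈ P.admissibleNullaryParts :=
    Finset.mem_filter.2 ⟨Finset.mem_powerset.2 (Finset.filter_subset _ _),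
      fun h => hgoal (Finset.mem_filter.1 h).2, τ 0, hτ 0⟩
  refine ⟨σ, hσ, fun c => Encodable.encode (τ c), fun f hf => ?_⟩
  obtain ⟨hrel, hlen⟩ := hI f hf
  refine mem_template.2 ⟨hrel, by simpa [Fact.map] using hlen, ?_, ?_⟩
  · intro c hc
    obtain ⟨a, -, rfl⟩ := List.mem_map.1 hc
    exact Finset.mem_image_of_mem _ (hτ a)
  · exact allowed_map hP.1 hcf hsimple (Finset.filter_subset _ _) ⟨τ 0, hτ 0⟩
      (fun c => typeLabel_encode (hτ c)) (fun hIDB => hP.1.1 _ hIDB hrel)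
      (hmodel _ (Set.insert_subset (hIJ hf) (labelFacts_parts_subset _ _))
        (Set.subset_insert _ _))

theorem models_iff_coCSP (hP : P.IsMDDLog SE) (hcf : P.constFree) (hbool : P.goalArity = 0)
    (hsimple : P.IsSimple) {I : Inst} (hI : SE.IsInstance I) :
    P.models I [] ↔ coCSP (P.admissibleNullaryParts.image (P.template SE)) I := by
  simp only [coCSP, Finset.forall_mem_image]
  refine ⟨fun hm σ hσ hhom => not_models_of_homTo hP.1 hcf hsimple hσ hhom hm, fun hco => ?_⟩
  by_contra hm
  obtain ⟨σ, hσ, hhom⟩ := exists_homTo_of_not_models hP hcf hbool hsimple hI hm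
  exact hco hσ hhom

end Program

end DDLogPaper

open DDLogPaper

/-- Thm. 3.2: translation of a simple Boolean MDDLog program into an
equivalent generalized CSP. -/
theorem statement_2 (SE : Schema) (P : Program)
    (hP : P.IsMDDLog SE) (hcf : P.constFree) (hbool : P.goalArity = 0)
    (hsimple : P.IsSimple) :
    ∃ SP : Finset Inst,
      (∀ T ∈ SP, SE.IsInstance T) ∧
      (∀ I : Inst, SE.IsInstance I → (P.models I [] ↔ coCSP SP I)) ∧
      SP.card ≤ 2 ^ P.IDB.card ∧
      (∀ T ∈ SP, T.card ≤ SE.rels.card * 2 ^ ((SE.rels.sup SE.arity) * P.IDB.card)) := by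
  refine ⟨P.admissibleNullaryParts.image (P.template SE), ?_,
    fun I hI => Program.models_iff_coCSP hP hcf hbool hsimple hI,
    Finset.card_image_le.trans Program.card_admissibleNullaryParts_le, ?_⟩ <;>
    simp only [Finset.forall_mem_image]
  · exact fun σ _ f hf => ⟨(Program.mem_template.1 hf).1, (Program.mem_template.1 hf).2.1⟩
  · exact fun σ _ => Program.card_template_le σ
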